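/- arXiv:cs/0502068 — 6 statements merged into one kernel-verified Lean document; each statement's English description precedes it below -/
import Mathlib

section
/- In the machine M (one AND gate and two HALF-OR latch gates wired as described), no valid machine state has all three free ports x, y, z simultaneously oriented 'out'. Consequently, the projection of every valid machine state onto the free ports is an allowed state of the OR gate. -/
/-!
Nondeterministic Constraint Logic.
A half-edge (port) orientation is a `Bool`: `true` = 'out', `false` = 'in'.
-/

/-- State of an AND gate: orientations of its three ports `a`, `b`, `c`. -/
structure AndState where
  a : Bool
  b : Bool
  c : Bool

/-- Allowed AND states: `c` is 'in', or both `a` and `b` are 'in' (5 states). -/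
def AndState.allowed (s : AndState) : Prop :=
  s.c = false ∨ (s.a = false ∧ s.b = false)

/-- State of a HALF-OR (latch) gate: orientations of ports `a`, `b`, `c`,
together with a latch component (`some false` = latched on `a`,
`some true` = latched on `b`, `none` = no latch). -/
structure HalfOrState where
  a : Bool
  b : Bool
  c : Bool
  latch : Option Bool

/-- Allowed HALF-OR states: either `c` is 'in' (4 states, no latch), or `c` is
'out' together with a latch component `d ∈ {a,b}` such that port `d` is 'in'
(4 states). -/
def HalfOrState.allowed (s : HalfOrState) : Prop :=
  (s.c = false ∧ s.latch = none) ∨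
  (s.c = true ∧ ((s.latch = some false ∧ s.a = false) ∨
                 (s.latch = some true ∧ s.b = false)))

/-- A state of the machine `M`: one AND gate `A` and two HALF-OR gates `H1`, `H2`. -/
structure MachineState where
  A : AndState
  H1 : HalfOrState
  H2 : HalfOrState

/-- Valid machine states: every gate is in an allowed state, and the matched
pairs `A.a`–`H1.c`, `A.b`–`H2.c`, `H1.b`–`H2.b` are oppositely oriented. -/
def MachineState.valid (M : MachineState) : Prop :=
  M.A.allowed ∧ M.H1.allowed ∧ M.H2.allowed ∧
  M.A.a = !M.H1.c ∧ M.A.b = !M.H2.c ∧ M.H1.b = !M.H2.b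

/-- Free port `x = H1.a`. -/
def MachineState.x (M : MachineState) : Bool := M.H1.a
/-- Free port `y = H2.a`. -/
def MachineState.y (M : MachineState) : Bool := M.H2.a
/-- Free port `z = A.c`. -/
def MachineState.z (M : MachineState) : Bool := M.A.c

/-- Allowed OR-gate states: every orientation triple except all three 'out'. -/
def orAllowed (t : Bool × Bool × Bool) : Prop := t ≠ (true, true, true)

/-- no valid machine state has all three free ports `x`, `y`, `z`
simultaneously 'out'; consequently the free-port projection of every valid
machine state is an allowed OR-gate state. -/
theorem stmt_0 (M : MachineState) (h : M.valid) :
    ¬ (M.x = true ∧ M.y = true ∧ M.z = true) ∧ orAllowed (M.x, M.y, M.z) := by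
  obtain ⟨hA, h1, h2, e1, e2, e3⟩ := h
  simp only [MachineState.x, MachineState.y, MachineState.z, orAllowed,
    AndState.allowed, HalfOrState.allowed] at *
  constructor
  · rintro ⟨hx, hy, hz⟩
    rcases hA with hc | ⟨ha, hb⟩
    · simp [hz] at hc
    · rcases h1 with ⟨hc1, _⟩ | ⟨hc1, hl1⟩
      · simp [hc1] at e1; simp [e1] at ha
      · rcases h2 with ⟨hc2, _⟩ | ⟨hc2, hl2⟩
        · simp [hc2] at e2; simp [e2] at hb
        · rcases hl1 with ⟨_, ha1⟩ | ⟨_, hb1⟩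
          · simp [ha1] at hx
          · rcases hl2 with ⟨_, ha2⟩ | ⟨_, hb2⟩
            · simp [ha2] at hy
            · rw [hb1, hb2] at e3; simp at e3
  · intro hcontra
    injection hcontra with hx h'
    injection h' with hy hz
    rcases hA with hc | ⟨ha, hb⟩
    · simp [hz] at hc
    · rcases h1 with ⟨hc1, _⟩ | ⟨hc1, hl1⟩
      · simp [hc1] at e1; simp [e1] at ha
      · rcases h2 with ⟨hc2, _⟩ | ⟨hc2, hl2⟩
        · simp [hc2] at e2; simp [e2] at hb
        · rcases hl1 with ⟨_, ha1⟩ | ⟨_, hb1⟩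
          · simp [ha1] at hx
          · rcases hl2 with ⟨_, ha2⟩ | ⟨_, hb2⟩
            · simp [ha2] at hy
            · rw [hb1, hb2] at e3; simp at e3
end

section
/- For the machine M (one AND gate and two HALF-OR latch gates wired as described), every one of the 7 allowed OR-gate states — i.e., every orientation triple of (x,y,z) except all three 'out' — is the free-port projection of at least one valid machine state. -/
/-- every allowed OR-gate state — i.e. every orientation triple of
`(x, y, z)` except all three 'out' — is the free-port projection of at least
one valid machine state. -/
theorem stmt_1 (s : Bool × Bool × Bool) (hs : orAllowed s) :
    ∃ M : MachineState, M.valid ∧ (M.x, M.y, M.z) = s := by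
  obtain ⟨x, y, z⟩ := s
  match x, y, z with
  | true, true, true => exact absurd rfl hs
  | x, y, false =>
      exact ⟨⟨⟨true, true, false⟩, ⟨x, true, false, none⟩, ⟨y, false, false, none⟩⟩,
        ⟨Or.inl rfl, Or.inl ⟨rfl, rfl⟩, Or.inl ⟨rfl, rfl⟩, rfl, rfl, rfl⟩, rfl⟩
  | x, false, true =>
      exact ⟨⟨⟨false, false, true⟩, ⟨x, false, true, some true⟩,
        ⟨false, true, true, some false⟩⟩,
        ⟨Or.inr ⟨rfl, rfl⟩, Or.inr ⟨rfl, Or.inr ⟨rfl, rfl⟩⟩,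
         Or.inr ⟨rfl, Or.inl ⟨rfl, rfl⟩⟩, rfl, rfl, rfl⟩, rfl⟩
  | false, true, true =>
      exact ⟨⟨⟨false, false, true⟩, ⟨false, true, true, some false⟩,
        ⟨true, false, true, some true⟩⟩,
        ⟨Or.inr ⟨rfl, rfl⟩, Or.inr ⟨rfl, Or.inl ⟨rfl, rfl⟩⟩,
         Or.inr ⟨rfl, Or.inr ⟨rfl, rfl⟩⟩, rfl, rfl, rfl⟩, rfl⟩
end

section
/- For the machine M (one AND gate and two HALF-OR latch gates wired as described), every one of the 9 transitions of the OR gate is realizable: for any two allowed OR states s and t whose orientation triples differ in exactly one of the ports x, y, z, there exist valid machine states m_s and m_t whose free-port projections are s and t respectively, and a finite sequence of machine transitions from m_s to m_t during which the orientations of the two free ports other than the differing one never change. -/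
/-- A machine transition: flip the orientation of exactly one free half-edge
(`x = H1.a`, `y = H2.a`, `z = A.c`), or of both halves of one matched pair
(`A.a`–`H1.c`, `A.b`–`H2.c`, `H1.b`–`H2.b`) simultaneously, such that both
machine states are valid (so every affected gate performs a legal gate
transition); a latch component may change only when the orientation of the
corresponding `c` port flips. -/
def MachineStep (M M' : MachineState) : Prop :=
  M.valid ∧ M'.valid ∧
  ( -- flip free port x = H1.a
    (M'.A = M.A ∧ M'.H2 = M.H2 ∧
      M'.H1.a = !M.H1.a ∧ M'.H1.b = M.H1.b ∧ M'.H1.c = M.H1.c ∧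
      M'.H1.latch = M.H1.latch) ∨
    -- flip free port y = H2.a
    (M'.A = M.A ∧ M'.H1 = M.H1 ∧
      M'.H2.a = !M.H2.a ∧ M'.H2.b = M.H2.b ∧ M'.H2.c = M.H2.c ∧
      M'.H2.latch = M.H2.latch) ∨
    -- flip free port z = A.c
    (M'.H1 = M.H1 ∧ M'.H2 = M.H2 ∧
      M'.A.a = M.A.a ∧ M'.A.b = M.A.b ∧ M'.A.c = !M.A.c) ∨
    -- flip matched pair A.a–H1.c (latch of H1 may change)
    (M'.H2 = M.H2 ∧
      M'.A.a = !M.A.a ∧ M'.A.b = M.A.b ∧ M'.A.c = M.A.c ∧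
      M'.H1.a = M.H1.a ∧ M'.H1.b = M.H1.b ∧ M'.H1.c = !M.H1.c) ∨
    -- flip matched pair A.b–H2.c (latch of H2 may change)
    (M'.H1 = M.H1 ∧
      M'.A.a = M.A.a ∧ M'.A.b = !M.A.b ∧ M'.A.c = M.A.c ∧
      M'.H2.a = M.H2.a ∧ M'.H2.b = M.H2.b ∧ M'.H2.c = !M.H2.c) ∨
    -- flip matched pair H1.b–H2.b
    (M'.A = M.A ∧
      M'.H1.a = M.H1.a ∧ M'.H1.b = !M.H1.b ∧ M'.H1.c = M.H1.c ∧
      M'.H1.latch = M.H1.latch ∧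
      M'.H2.a = M.H2.a ∧ M'.H2.b = !M.H2.b ∧ M'.H2.c = M.H2.c ∧
      M'.H2.latch = M.H2.latch) )


deriving instance DecidableEq for AndState
deriving instance DecidableEq for HalfOrState

instance (s : AndState) : Decidable s.allowed := by
  unfold AndState.allowed; infer_instance
instance (s : HalfOrState) : Decidable s.allowed := by
  unfold HalfOrState.allowed; infer_instance
instance (M : MachineState) : Decidable M.valid := by
  unfold MachineState.valid; infer_instance
instance (M M' : MachineState) : Decidable (MachineStep M M') := by
  unfold MachineStep; infer_instance

lemma case_fff_fft : ∃ Ms Mt : MachineState, Ms.valid ∧ Mt.valid ∧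
    (Ms.x, Ms.y, Ms.z) = (false,false,false) ∧ (Mt.x, Mt.y, Mt.z) = (false,false,true) ∧
    Relation.ReflTransGen (fun M M' => MachineStep M M' ∧ (false = false → M'.x = M.x) ∧ (false = false → M'.y = M.y) ∧ (false = true → M'.z = M.z)) Ms Mt := by
  refine ⟨(⟨⟨false,false,false⟩,⟨false,false,true,some false⟩,⟨false,true,true,some false⟩⟩ : MachineState), (⟨⟨false,false,true⟩,⟨false,false,true,some false⟩,⟨false,true,true,some false⟩⟩ : MachineState), by decide, by decide, by decide, by decide, ?_⟩
  exact (Relation.ReflTransGen.head (by decide) Relation.ReflTransGen.refl)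

lemma case_fff_ftf : ∃ Ms Mt : MachineState, Ms.valid ∧ Mt.valid ∧
    (Ms.x, Ms.y, Ms.z) = (false,false,false) ∧ (Mt.x, Mt.y, Mt.z) = (false,true,false) ∧
    Relation.ReflTransGen (fun M M' => MachineStep M M' ∧ (false = false → M'.x = M.x) ∧ (false = true → M'.y = M.y) ∧ (false = false → M'.z = M.z)) Ms Mt := by
  refine ⟨(⟨⟨false,false,false⟩,⟨false,true,true,some false⟩,⟨false,false,true,some true⟩⟩ : MachineState), (⟨⟨false,false,false⟩,⟨false,true,true,some false⟩,⟨true,false,true,some true⟩⟩ : MachineState), by decide, by decide, by decide, by decide, ?_⟩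
  exact (Relation.ReflTransGen.head (by decide) Relation.ReflTransGen.refl)

lemma case_fff_tff : ∃ Ms Mt : MachineState, Ms.valid ∧ Mt.valid ∧
    (Ms.x, Ms.y, Ms.z) = (false,false,false) ∧ (Mt.x, Mt.y, Mt.z) = (true,false,false) ∧
    Relation.ReflTransGen (fun M M' => MachineStep M M' ∧ (false = true → M'.x = M.x) ∧ (false = false → M'.y = M.y) ∧ (false = false → M'.z = M.z)) Ms Mt := by
  refine ⟨(⟨⟨false,false,false⟩,⟨false,false,true,some true⟩,⟨false,true,true,some false⟩⟩ : MachineState), (⟨⟨false,false,false⟩,⟨true,false,true,some true⟩,⟨false,true,true,some false⟩⟩ : MachineState), by decide, by decide, by decide, by decide, ?_⟩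
  exact (Relation.ReflTransGen.head (by decide) Relation.ReflTransGen.refl)

lemma case_fft_fff : ∃ Ms Mt : MachineState, Ms.valid ∧ Mt.valid ∧
    (Ms.x, Ms.y, Ms.z) = (false,false,true) ∧ (Mt.x, Mt.y, Mt.z) = (false,false,false) ∧
    Relation.ReflTransGen (fun M M' => MachineStep M M' ∧ (false = false → M'.x = M.x) ∧ (false = false → M'.y = M.y) ∧ (true = false → M'.z = M.z)) Ms Mt := by
  refine ⟨(⟨⟨false,false,true⟩,⟨false,false,true,some false⟩,⟨false,true,true,some false⟩⟩ : MachineState), (⟨⟨false,false,false⟩,⟨false,false,true,some false⟩,⟨false,true,true,some false⟩⟩ : MachineState), by decide, by decide, by decide, by decide, ?_⟩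
  exact (Relation.ReflTransGen.head (by decide) Relation.ReflTransGen.refl)

lemma case_fft_ftt : ∃ Ms Mt : MachineState, Ms.valid ∧ Mt.valid ∧
    (Ms.x, Ms.y, Ms.z) = (false,false,true) ∧ (Mt.x, Mt.y, Mt.z) = (false,true,true) ∧
    Relation.ReflTransGen (fun M M' => MachineStep M M' ∧ (false = false → M'.x = M.x) ∧ (false = true → M'.y = M.y) ∧ (true = true → M'.z = M.z)) Ms Mt := by
  refine ⟨(⟨⟨false,false,true⟩,⟨false,true,true,some false⟩,⟨false,false,true,some true⟩⟩ : MachineState), (⟨⟨false,false,true⟩,⟨false,true,true,some false⟩,⟨true,false,true,some true⟩⟩ : MachineState), by decide, by decide, by decide, by decide, ?_⟩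
  exact (Relation.ReflTransGen.head (by decide) Relation.ReflTransGen.refl)

lemma case_fft_tft : ∃ Ms Mt : MachineState, Ms.valid ∧ Mt.valid ∧
    (Ms.x, Ms.y, Ms.z) = (false,false,true) ∧ (Mt.x, Mt.y, Mt.z) = (true,false,true) ∧
    Relation.ReflTransGen (fun M M' => MachineStep M M' ∧ (false = true → M'.x = M.x) ∧ (false = false → M'.y = M.y) ∧ (true = true → M'.z = M.z)) Ms Mt := by
  refine ⟨(⟨⟨false,false,true⟩,⟨false,false,true,some true⟩,⟨false,true,true,some false⟩⟩ : MachineState), (⟨⟨false,false,true⟩,⟨true,false,true,some true⟩,⟨false,true,true,some false⟩⟩ : MachineState), by decide, by decide, by decide, by decide, ?_⟩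
  exact (Relation.ReflTransGen.head (by decide) Relation.ReflTransGen.refl)

lemma case_ftf_fff : ∃ Ms Mt : MachineState, Ms.valid ∧ Mt.valid ∧
    (Ms.x, Ms.y, Ms.z) = (false,true,false) ∧ (Mt.x, Mt.y, Mt.z) = (false,false,false) ∧
    Relation.ReflTransGen (fun M M' => MachineStep M M' ∧ (false = false → M'.x = M.x) ∧ (true = false → M'.y = M.y) ∧ (false = false → M'.z = M.z)) Ms Mt := by
  refine ⟨(⟨⟨false,false,false⟩,⟨false,true,true,some false⟩,⟨true,false,true,some true⟩⟩ : MachineState), (⟨⟨false,false,false⟩,⟨false,true,true,some false⟩,⟨false,false,true,some true⟩⟩ : MachineState), by decide, by decide, by decide, by decide, ?_⟩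
  exact (Relation.ReflTransGen.head (by decide) Relation.ReflTransGen.refl)

lemma case_ftf_ftt : ∃ Ms Mt : MachineState, Ms.valid ∧ Mt.valid ∧
    (Ms.x, Ms.y, Ms.z) = (false,true,false) ∧ (Mt.x, Mt.y, Mt.z) = (false,true,true) ∧
    Relation.ReflTransGen (fun M M' => MachineStep M M' ∧ (false = false → M'.x = M.x) ∧ (true = true → M'.y = M.y) ∧ (false = true → M'.z = M.z)) Ms Mt := by
  refine ⟨(⟨⟨false,false,false⟩,⟨false,true,true,some false⟩,⟨true,false,true,some true⟩⟩ : MachineState), (⟨⟨false,false,true⟩,⟨false,true,true,some false⟩,⟨true,false,true,some true⟩⟩ : MachineState), by decide, by decide, by decide, by decide, ?_⟩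
  exact (Relation.ReflTransGen.head (by decide) Relation.ReflTransGen.refl)

lemma case_ftf_ttf : ∃ Ms Mt : MachineState, Ms.valid ∧ Mt.valid ∧
    (Ms.x, Ms.y, Ms.z) = (false,true,false) ∧ (Mt.x, Mt.y, Mt.z) = (true,true,false) ∧
    Relation.ReflTransGen (fun M M' => MachineStep M M' ∧ (false = true → M'.x = M.x) ∧ (true = true → M'.y = M.y) ∧ (false = false → M'.z = M.z)) Ms Mt := by
  refine ⟨(⟨⟨false,true,false⟩,⟨false,false,true,some true⟩,⟨true,true,false,none⟩⟩ : MachineState), (⟨⟨false,true,false⟩,⟨true,false,true,some true⟩,⟨true,true,false,none⟩⟩ : MachineState), by decide, by decide, by decide, by decide, ?_⟩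
  exact (Relation.ReflTransGen.head (by decide) Relation.ReflTransGen.refl)

lemma case_ftt_fft : ∃ Ms Mt : MachineState, Ms.valid ∧ Mt.valid ∧
    (Ms.x, Ms.y, Ms.z) = (false,true,true) ∧ (Mt.x, Mt.y, Mt.z) = (false,false,true) ∧
    Relation.ReflTransGen (fun M M' => MachineStep M M' ∧ (false = false → M'.x = M.x) ∧ (true = false → M'.y = M.y) ∧ (true = true → M'.z = M.z)) Ms Mt := by
  refine ⟨(⟨⟨false,false,true⟩,⟨false,true,true,some false⟩,⟨true,false,true,some true⟩⟩ : MachineState), (⟨⟨false,false,true⟩,⟨false,true,true,some false⟩,⟨false,false,true,some true⟩⟩ : MachineState), by decide, by decide, by decide, by decide, ?_⟩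
  exact (Relation.ReflTransGen.head (by decide) Relation.ReflTransGen.refl)

lemma case_ftt_ftf : ∃ Ms Mt : MachineState, Ms.valid ∧ Mt.valid ∧
    (Ms.x, Ms.y, Ms.z) = (false,true,true) ∧ (Mt.x, Mt.y, Mt.z) = (false,true,false) ∧
    Relation.ReflTransGen (fun M M' => MachineStep M M' ∧ (false = false → M'.x = M.x) ∧ (true = true → M'.y = M.y) ∧ (true = false → M'.z = M.z)) Ms Mt := by
  refine ⟨(⟨⟨false,false,true⟩,⟨false,true,true,some false⟩,⟨true,false,true,some true⟩⟩ : MachineState), (⟨⟨false,false,false⟩,⟨false,true,true,some false⟩,⟨true,false,true,some true⟩⟩ : MachineState), by decide, by decide, by decide, by decide, ?_⟩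
  exact (Relation.ReflTransGen.head (by decide) Relation.ReflTransGen.refl)

lemma case_tff_fff : ∃ Ms Mt : MachineState, Ms.valid ∧ Mt.valid ∧
    (Ms.x, Ms.y, Ms.z) = (true,false,false) ∧ (Mt.x, Mt.y, Mt.z) = (false,false,false) ∧
    Relation.ReflTransGen (fun M M' => MachineStep M M' ∧ (true = false → M'.x = M.x) ∧ (false = false → M'.y = M.y) ∧ (false = false → M'.z = M.z)) Ms Mt := by
  refine ⟨(⟨⟨false,false,false⟩,⟨true,false,true,some true⟩,⟨false,true,true,some false⟩⟩ : MachineState), (⟨⟨false,false,false⟩,⟨false,false,true,some true⟩,⟨false,true,true,some false⟩⟩ : MachineState), by decide, by decide, by decide, by decide, ?_⟩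
  exact (Relation.ReflTransGen.head (by decide) Relation.ReflTransGen.refl)

lemma case_tff_tft : ∃ Ms Mt : MachineState, Ms.valid ∧ Mt.valid ∧
    (Ms.x, Ms.y, Ms.z) = (true,false,false) ∧ (Mt.x, Mt.y, Mt.z) = (true,false,true) ∧
    Relation.ReflTransGen (fun M M' => MachineStep M M' ∧ (true = true → M'.x = M.x) ∧ (false = false → M'.y = M.y) ∧ (false = true → M'.z = M.z)) Ms Mt := by
  refine ⟨(⟨⟨false,false,false⟩,⟨true,false,true,some true⟩,⟨false,true,true,some false⟩⟩ : MachineState), (⟨⟨false,false,true⟩,⟨true,false,true,some true⟩,⟨false,true,true,some false⟩⟩ : MachineState), by decide, by decide, by decide, by decide, ?_⟩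
  exact (Relation.ReflTransGen.head (by decide) Relation.ReflTransGen.refl)

lemma case_tff_ttf : ∃ Ms Mt : MachineState, Ms.valid ∧ Mt.valid ∧
    (Ms.x, Ms.y, Ms.z) = (true,false,false) ∧ (Mt.x, Mt.y, Mt.z) = (true,true,false) ∧
    Relation.ReflTransGen (fun M M' => MachineStep M M' ∧ (true = true → M'.x = M.x) ∧ (false = true → M'.y = M.y) ∧ (false = false → M'.z = M.z)) Ms Mt := by
  refine ⟨(⟨⟨false,true,false⟩,⟨true,false,true,some true⟩,⟨false,true,false,none⟩⟩ : MachineState), (⟨⟨false,true,false⟩,⟨true,false,true,some true⟩,⟨true,true,false,none⟩⟩ : MachineState), by decide, by decide, by decide, by decide, ?_⟩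
  exact (Relation.ReflTransGen.head (by decide) Relation.ReflTransGen.refl)

lemma case_tft_fft : ∃ Ms Mt : MachineState, Ms.valid ∧ Mt.valid ∧
    (Ms.x, Ms.y, Ms.z) = (true,false,true) ∧ (Mt.x, Mt.y, Mt.z) = (false,false,true) ∧
    Relation.ReflTransGen (fun M M' => MachineStep M M' ∧ (true = false → M'.x = M.x) ∧ (false = false → M'.y = M.y) ∧ (true = true → M'.z = M.z)) Ms Mt := by
  refine ⟨(⟨⟨false,false,true⟩,⟨true,false,true,some true⟩,⟨false,true,true,some false⟩⟩ : MachineState), (⟨⟨false,false,true⟩,⟨false,false,true,some true⟩,⟨false,true,true,some false⟩⟩ : MachineState), by decide, by decide, by decide, by decide, ?_⟩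
  exact (Relation.ReflTransGen.head (by decide) Relation.ReflTransGen.refl)

lemma case_tft_tff : ∃ Ms Mt : MachineState, Ms.valid ∧ Mt.valid ∧
    (Ms.x, Ms.y, Ms.z) = (true,false,true) ∧ (Mt.x, Mt.y, Mt.z) = (true,false,false) ∧
    Relation.ReflTransGen (fun M M' => MachineStep M M' ∧ (true = true → M'.x = M.x) ∧ (false = false → M'.y = M.y) ∧ (true = false → M'.z = M.z)) Ms Mt := by
  refine ⟨(⟨⟨false,false,true⟩,⟨true,false,true,some true⟩,⟨false,true,true,some false⟩⟩ : MachineState), (⟨⟨false,false,false⟩,⟨true,false,true,some true⟩,⟨false,true,true,some false⟩⟩ : MachineState), by decide, by decide, by decide, by decide, ?_⟩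
  exact (Relation.ReflTransGen.head (by decide) Relation.ReflTransGen.refl)

lemma case_ttf_ftf : ∃ Ms Mt : MachineState, Ms.valid ∧ Mt.valid ∧
    (Ms.x, Ms.y, Ms.z) = (true,true,false) ∧ (Mt.x, Mt.y, Mt.z) = (false,true,false) ∧
    Relation.ReflTransGen (fun M M' => MachineStep M M' ∧ (true = false → M'.x = M.x) ∧ (true = true → M'.y = M.y) ∧ (false = false → M'.z = M.z)) Ms Mt := by
  refine ⟨(⟨⟨false,true,false⟩,⟨true,false,true,some true⟩,⟨true,true,false,none⟩⟩ : MachineState), (⟨⟨false,true,false⟩,⟨false,false,true,some true⟩,⟨true,true,false,none⟩⟩ : MachineState), by decide, by decide, by decide, by decide, ?_⟩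
  exact (Relation.ReflTransGen.head (by decide) Relation.ReflTransGen.refl)

lemma case_ttf_tff : ∃ Ms Mt : MachineState, Ms.valid ∧ Mt.valid ∧
    (Ms.x, Ms.y, Ms.z) = (true,true,false) ∧ (Mt.x, Mt.y, Mt.z) = (true,false,false) ∧
    Relation.ReflTransGen (fun M M' => MachineStep M M' ∧ (true = true → M'.x = M.x) ∧ (true = false → M'.y = M.y) ∧ (false = false → M'.z = M.z)) Ms Mt := by
  refine ⟨(⟨⟨false,true,false⟩,⟨true,false,true,some true⟩,⟨true,true,false,none⟩⟩ : MachineState), (⟨⟨false,true,false⟩,⟨true,false,true,some true⟩,⟨false,true,false,none⟩⟩ : MachineState), by decide, by decide, by decide, by decide, ?_⟩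
  exact (Relation.ReflTransGen.head (by decide) Relation.ReflTransGen.refl)

/-- every one of the 9 transitions of the OR gate is realizable:
for any two allowed OR states `s`, `t` differing in exactly one of the ports
`x`, `y`, `z`, there are valid machine states projecting to `s` and `t`,
connected by a finite sequence of machine transitions during which the
orientations of the two free ports other than the differing one never change. -/
theorem stmt_2 (s t : Bool × Bool × Bool)
    (hs : orAllowed s) (ht : orAllowed t)
    (hdiff : (s.1 ≠ t.1 ∧ s.2.1 = t.2.1 ∧ s.2.2 = t.2.2) ∨
             (s.1 = t.1 ∧ s.2.1 ≠ t.2.1 ∧ s.2.2 = t.2.2) ∨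
             (s.1 = t.1 ∧ s.2.1 = t.2.1 ∧ s.2.2 ≠ t.2.2)) :
    ∃ Ms Mt : MachineState, Ms.valid ∧ Mt.valid ∧
      (Ms.x, Ms.y, Ms.z) = s ∧ (Mt.x, Mt.y, Mt.z) = t ∧
      Relation.ReflTransGen
        (fun M M' => MachineStep M M' ∧
          (s.1 = t.1 → M'.x = M.x) ∧
          (s.2.1 = t.2.1 → M'.y = M.y) ∧
          (s.2.2 = t.2.2 → M'.z = M.z))
        Ms Mt := by

  obtain ⟨s1, s2, s3⟩ := s
  obtain ⟨t1, t2, t3⟩ := t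
  cases s1 <;> cases s2 <;> cases s3 <;> cases t1 <;> cases t2 <;> cases t3 <;>
    first
      | exact case_fff_fft
      | exact case_fff_ftf
      | exact case_fff_tff
      | exact case_fft_fff
      | exact case_fft_ftt
      | exact case_fft_tft
      | exact case_ftf_fff
      | exact case_ftf_ftt
      | exact case_ftf_ttf
      | exact case_ftt_fft
      | exact case_ftt_ftf
      | exact case_tff_fff
      | exact case_tff_tft
      | exact case_tff_ttf
      | exact case_tft_fft
      | exact case_tft_tff
      | exact case_ttf_ftf
      | exact case_ttf_tff
      | exact absurd rfl hs
      | exact absurd rfl ht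
      | exact absurd hdiff (by decide)
end

section
/- In a Rush Hour Maze, a cell c can be visited by the player (i.e., after some finite sequence of legal moves the player's cell is c) if and only if c is the start cell or the static digraph of the initial maze contains a directed path from the start cell to c. -/
/-- A cell of an `m × n` grid, indexed (row, column), column 0 leftmost. -/
abbrev Cell (m n : ℕ) := Fin m × Fin n

/-- `u` and `v` are horizontally adjacent. -/
def hAdj {m n : ℕ} (u v : Cell m n) : Prop :=
  u.1 = v.1 ∧ (u.2.val + 1 = v.2.val ∨ v.2.val + 1 = u.2.val)

/-- `u` and `v` are vertically adjacent. -/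
def vAdj {m n : ℕ} (u v : Cell m n) : Prop :=
  u.2 = v.2 ∧ (u.1.val + 1 = v.1.val ∨ v.1.val + 1 = u.1.val)

/-- A Unit Rush Hour configuration on an `m × n` grid with `k` (labeled) cars:
each car `i` has an orientation `ori i` (`true` = horizontal, `false` =
vertical) and a position `pos i`; distinct cars occupy distinct cells.
Cells outside the range of `pos` are empty. -/
structure RHConfig (m n k : ℕ) where
  ori : Fin k → Bool
  pos : Fin k → Cell m n
  inj : Function.Injective pos

/-- A legal move: one car `i` slides one cell into an adjacent empty cell —
horizontally if it is a horizontal car, vertically if it is a vertical car —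
while all other cars (and all orientations) stay put. -/
def RHMove {m n k : ℕ} (c c' : RHConfig m n k) : Prop :=
  c'.ori = c.ori ∧
  ∃ i : Fin k,
    (∀ j, j ≠ i → c'.pos j = c.pos j) ∧
    (∀ j, c.pos j ≠ c'.pos i) ∧
    ((c.ori i = true ∧ hAdj (c.pos i) (c'.pos i)) ∨
     (c.ori i = false ∧ vAdj (c.pos i) (c'.pos i)))

/-- A Rush Hour Maze state: the player's current cell, and an orientation for
every cell (`true` = horizontal H, `false` = vertical V); the value at the
player's cell is irrelevant (the player's cell carries no orientation). -/
structure Maze (m n : ℕ) where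
  player : Cell m n
  ori : Cell m n → Bool

/-- A legal maze move from state `s` to state `s'`: the player moves from
`u = s.player` to an adjacent cell `v = s'.player` provided `v`'s current
orientation is H and `v` is horizontally adjacent to `u`, or `v`'s current
orientation is V and `v` is vertically adjacent to `u`; afterwards `u` is
assigned the orientation given by the direction `b` of the move
(`true` = horizontal). -/
def MazeMove {m n : ℕ} (s s' : Maze m n) : Prop :=
  ∃ b : Bool,
    ((b = true ∧ hAdj s.player s'.player) ∨
     (b = false ∧ vAdj s.player s'.player)) ∧
    s.ori s'.player = b ∧
    s'.ori = Function.update s.ori s.player b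

/-- The static digraph of the initial maze `s0`: for every cell `v` other than
the start, an edge `u → v` whenever `v` is horizontally adjacent to `u` and
`v`'s initial orientation is H, or `v` is vertically adjacent to `u` and `v`'s
initial orientation is V. -/
def mazeEdge {m n : ℕ} (s0 : Maze m n) (u v : Cell m n) : Prop :=
  v ≠ s0.player ∧
  ((s0.ori v = true ∧ hAdj u v) ∨ (s0.ori v = false ∧ vAdj u v))

/-- If a cell's orientation has changed along a run, the player has visited it. -/
lemma visited_of_ori_ne {m n : ℕ} {s0 s : Maze m n}
    (h : Relation.ReflTransGen MazeMove s0 s) :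
    ∀ w, s.ori w ≠ s0.ori w →
      ∃ t : Maze m n, Relation.ReflTransGen MazeMove s0 t ∧ t.player = w := by
  induction h with
  | refl => exact fun w hw => absurd rfl hw
  | @tail mid s' hmid hmove ih =>
    intro w hw
    obtain ⟨b, _, _, hupd⟩ := hmove
    by_cases hwp : w = mid.player
    · exact ⟨mid, hmid, hwp.symm⟩
    · refine ih w ?_
      rw [hupd, Function.update_of_ne hwp] at hw
      exact hw

/-- One-step simulation: from a visited cell, any static edge target is visitable. -/
lemma step_reach {m n : ℕ} {s0 : Maze m n} {u v : Cell m n}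
    (hu : ∃ s : Maze m n, Relation.ReflTransGen MazeMove s0 s ∧ s.player = u)
    (he : mazeEdge s0 u v) :
    ∃ s : Maze m n, Relation.ReflTransGen MazeMove s0 s ∧ s.player = v := by
  obtain ⟨s, hs, hp⟩ := hu
  by_cases hov : s.ori v = s0.ori v
  · refine ⟨⟨v, Function.update s.ori s.player (s0.ori v)⟩, hs.tail ?_, rfl⟩
    refine ⟨s0.ori v, ?_, by rw [hov], rfl⟩
    rcases he.2 with ⟨h1, h2⟩ | ⟨h1, h2⟩
    · exact Or.inl ⟨h1, hp ▸ h2⟩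
    · exact Or.inr ⟨h1, hp ▸ h2⟩
  · exact visited_of_ori_ne hs v hov

/-- in a Rush Hour Maze, a cell `c` can be visited by the player
(after some finite sequence of legal moves) if and only if `c` is the start
cell or the static digraph of the initial maze contains a directed path from
the start cell to `c`. -/
theorem stmt_3 {m n : ℕ} (s0 : Maze m n) (c : Cell m n) :
    (∃ s : Maze m n, Relation.ReflTransGen MazeMove s0 s ∧ s.player = c) ↔
    (c = s0.player ∨ Relation.TransGen (mazeEdge s0) s0.player c) := by

  constructor
  · rintro ⟨s, hs, rfl⟩
    suffices H : (s.player = s0.player ∨ Relation.TransGen (mazeEdge s0) s0.player s.player) ∧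
        ∀ w, s.ori w ≠ s0.ori w →
          (w = s0.player ∨ Relation.TransGen (mazeEdge s0) s0.player w) from H.1
    induction hs with
    | refl => exact ⟨Or.inl rfl, fun w hw => absurd rfl hw⟩
    | @tail mid s' hmid hmove ih =>
      obtain ⟨b, hdir, hori, hupd⟩ := hmove
      constructor
      · by_cases hv : s'.player = s0.player
        · exact Or.inl hv
        · by_cases hov : mid.ori s'.player = s0.ori s'.player
          · have hedge : mazeEdge s0 mid.player s'.player := by
              refine ⟨hv, ?_⟩
              rcases hdir with ⟨hb, hadj⟩ | ⟨hb, hadj⟩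
              · exact Or.inl ⟨by rw [← hov, hori, hb], hadj⟩
              · exact Or.inr ⟨by rw [← hov, hori, hb], hadj⟩
            rcases ih.1 with h | h
            · exact Or.inr (Relation.TransGen.single (h ▸ hedge))
            · exact Or.inr (h.tail hedge)
          · exact ih.2 s'.player hov
      · intro w hw
        by_cases hwp : w = mid.player
        · exact hwp ▸ ih.1
        · rw [hupd, Function.update_of_ne hwp] at hw
          exact ih.2 w hw
  · rintro (rfl | h)
    · exact ⟨s0, Relation.ReflTransGen.refl, rfl⟩
    · induction h with
      | single he => exact step_reach ⟨s0, Relation.ReflTransGen.refl, rfl⟩ he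
      | tail _ he ih => exact step_reach ih he
end

section
/- In a Unit Rush Hour configuration with exactly one empty cell, a designated car initially occupying cell c is moved during some finite sequence of legal moves if and only if the associated static digraph contains a directed path of length at least 1 from the empty cell to c. -/
/-- The static digraph of a configuration with exactly one empty cell: for
every cell `v` other than the empty cell, an edge `u → v` whenever `v` is
horizontally adjacent to `u` and `v` contains a horizontal car, or `v` is
vertically adjacent to `u` and `v` contains a vertical car. -/
def staticEdge {m n k : ℕ} (c : RHConfig m n k) (u v : Cell m n) : Prop :=
  ∃ j : Fin k, c.pos j = v ∧
    ((c.ori j = true ∧ hAdj u v) ∨ (c.ori j = false ∧ vAdj u v))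


/-!
A car can only ever move into the hole, and the hole can only move backwards along an edge of the
static digraph: if the hole is at `x` and the car at `y` slides into it, then `x → y` is an edge
for that car's orientation. Hence the hole stays in the set `R` of cells reachable from the initial
empty cell, and cars starting outside `R` never move. Conversely, sliding the cars of a simple
path `e → ⋯ → v` one after the other walks the hole to `v`, which moves the car that was there;
simplicity guarantees that each car is still in its original cell when its turn comes.
-/

theorem Relation.ReflTransGen.exists_nodup_isChain_cons {α : Type*} {r : α → α → Prop} {a b : α}
    (h : Relation.ReflTransGen r a b) :
    ∃ l, (a :: l).IsChain r ∧ (a :: l).getLast (List.cons_ne_nil _ _) = b ∧ (a :: l).Nodup := by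
  classical
  induction h using Relation.ReflTransGen.head_induction_on with
  | refl => exact ⟨[], .singleton _, rfl, List.nodup_singleton _⟩
  | @head x y hxy _ ih =>
    obtain ⟨l, hchain, hlast, hnodup⟩ := ih
    by_cases hx : x ∈ y :: l
    · -- cut the loop back to `x`
      obtain ⟨p, s, hps⟩ := List.append_of_mem hx
      rw [hps] at hchain hnodup
      refine ⟨s, hchain.suffix (List.suffix_append p _), ?_,
        hnodup.sublist (List.suffix_append p _).sublist⟩
      rw [← hlast]
      simp [hps]
    · exact ⟨y :: l, List.isChain_cons_cons.mpr ⟨hxy, hchain⟩, by rwa [List.getLast_cons_cons],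
        List.nodup_cons.mpr ⟨hx, hnodup⟩⟩

variable {m n k : ℕ}

theorem hAdj_comm {u v : Cell m n} : hAdj u v ↔ hAdj v u :=
  ⟨fun h => ⟨h.1.symm, h.2.symm⟩, fun h => ⟨h.1.symm, h.2.symm⟩⟩

theorem vAdj_comm {u v : Cell m n} : vAdj u v ↔ vAdj v u :=
  ⟨fun h => ⟨h.1.symm, h.2.symm⟩, fun h => ⟨h.1.symm, h.2.symm⟩⟩

namespace RHConfig

theorem empty_cell_unique (c : RHConfig m n k) (hk : k + 1 = m * n) {a b : Cell m n}
    (ha : ∀ j, c.pos j ≠ a) (hb : ∀ j, c.pos j ≠ b) : a = b := by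
  classical
  have hcard : (Finset.univ.image c.pos)ᶜ.card ≤ 1 := by
    rw [Finset.card_compl, Finset.card_image_of_injective _ c.inj]
    simp only [Fintype.card_prod, Fintype.card_fin, Finset.card_univ]
    omega
  exact Finset.card_le_one.mp hcard a (by simpa using ha) b (by simpa using hb)

theorem staticEdge_pos_iff {c : RHConfig m n k} {u : Cell m n} {j : Fin k} :
    staticEdge c u (c.pos j) ↔
      (c.ori j = true ∧ hAdj (c.pos j) u) ∨ (c.ori j = false ∧ vAdj (c.pos j) u) := by
  simp only [staticEdge, c.inj.eq_iff, exists_eq_left, hAdj_comm (u := u), vAdj_comm (u := u)]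

def moveCar (d : RHConfig m n k) (j : Fin k) (u : Cell m n) (hu : ∀ j', d.pos j' ≠ u) :
    RHConfig m n k where
  ori := d.ori
  pos := Function.update d.pos j u
  inj a b hab := by
    by_cases ha : a = j <;> by_cases hb : b = j <;>
      simp_all [d.inj.eq_iff]

section moveCar

variable {d : RHConfig m n k} {j : Fin k} {u : Cell m n} {hu : ∀ j', d.pos j' ≠ u}

@[simp] theorem moveCar_pos_self : (d.moveCar j u hu).pos j = u :=
  Function.update_self _ _ _

theorem moveCar_pos_of_ne {j' : Fin k} (h : j' ≠ j) : (d.moveCar j u hu).pos j' = d.pos j' :=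
  Function.update_of_ne h _ _

theorem moveCar_pos_ne_pos_self (j' : Fin k) : (d.moveCar j u hu).pos j' ≠ d.pos j := by
  by_cases h : j' = j
  · rw [h, moveCar_pos_self]
    exact (hu j).symm
  · rw [moveCar_pos_of_ne h]
    exact d.inj.ne h

theorem rhMove_moveCar (h : staticEdge d u (d.pos j)) : RHMove d (d.moveCar j u hu) := by
  refine ⟨rfl, j, fun _ => moveCar_pos_of_ne, ?_, ?_⟩ <;> rw [moveCar_pos_self]
  exacts [hu, staticEdge_pos_iff.mp h]

theorem staticEdge_moveCar {a b : Cell m n} (h : staticEdge d a b) (hb : b ≠ d.pos j) :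
    staticEdge (d.moveCar j u hu) a b := by
  obtain ⟨j', rfl, hadj⟩ := h
  exact ⟨j', moveCar_pos_of_ne (fun h => hb (h ▸ rfl)), hadj⟩

end moveCar

theorem exists_reflTransGen_forall_pos_ne_getLast (d : RHConfig m n k) {u : Cell m n}
    (hu : ∀ j, d.pos j ≠ u) {l : List (Cell m n)} (hchain : (u :: l).IsChain (staticEdge d))
    (hnodup : (u :: l).Nodup) :
    ∃ d', Relation.ReflTransGen RHMove d d' ∧
      ∀ j, d'.pos j ≠ (u :: l).getLast (List.cons_ne_nil _ _) := by
  induction l generalizing d u with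
  | nil => exact ⟨d, .refl, hu⟩
  | cons v l ih =>
    obtain ⟨huv, hchain⟩ := List.isChain_cons_cons.mp hchain
    obtain ⟨-, hnodup⟩ := List.nodup_cons.mp hnodup
    obtain ⟨j, rfl, -⟩ := id huv
    have hchain' : (d.pos j :: l).IsChain (staticEdge (d.moveCar j u hu)) :=
      hchain.imp_of_mem_tail_imp fun _ b _ hb hab =>
        staticEdge_moveCar hab fun h => (List.nodup_cons.mp hnodup).1 (h ▸ hb)
    obtain ⟨d', hmoves, hlast⟩ := ih _ moveCar_pos_ne_pos_self hchain' hnodup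
    exact ⟨d', .head (rhMove_moveCar huv) hmoves, by rwa [List.getLast_cons_cons]⟩

structure Confined (c : RHConfig m n k) (R : Set (Cell m n)) (b : RHConfig m n k) : Prop where
  ori_eq : b.ori = c.ori
  empty_mem : ∀ x, (∀ j, b.pos j ≠ x) → x ∈ R
  mapsTo : ∀ j, c.pos j ∈ R → b.pos j ∈ R
  pos_eq : ∀ j, c.pos j ∉ R → b.pos j = c.pos j

namespace Confined

variable {c b b' : RHConfig m n k} {R : Set (Cell m n)}

theorem refl (hR : ∀ x, (∀ j, c.pos j ≠ x) → x ∈ R) : Confined c R c :=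
  ⟨rfl, hR, fun _ => id, fun _ _ => rfl⟩

theorem rhMove (hR : ∀ x y, x ∈ R → staticEdge c x y → y ∈ R) (hb : Confined c R b)
    (h : RHMove b b') : Confined c R b' := by
  obtain ⟨hori, i, hfix, htarget, hadj⟩ := h
  have htarget_mem : b'.pos i ∈ R := hb.empty_mem _ htarget
  -- a car outside `R` is still at its initial cell, so the hole it moves into has an edge to it
  have hi : c.pos i ∈ R := by
    by_contra hout
    refine hout (hR _ _ htarget_mem (staticEdge_pos_iff.mpr ?_))
    rwa [← hb.ori_eq, ← hb.pos_eq i hout]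
  refine ⟨hori.trans hb.ori_eq, fun x hx => ?_, fun j hj => ?_, fun j hj => ?_⟩
  · by_cases hxi : x = b.pos i
    · exact hxi ▸ hb.mapsTo i hi
    refine hb.empty_mem x fun j hj => ?_
    by_cases hji : j = i
    · exact hxi (hji ▸ hj.symm)
    · exact hx j (hfix j hji ▸ hj)
  · by_cases hji : j = i
    · exact hji ▸ htarget_mem
    · exact hfix j hji ▸ hb.mapsTo j hj
  · have hji : j ≠ i := fun h => hj (h ▸ hi)
    rw [hfix j hji, hb.pos_eq j hj]

theorem reflTransGen (hR : ∀ x y, x ∈ R → staticEdge c x y → y ∈ R) (hb : Confined c R b)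
    (h : Relation.ReflTransGen RHMove b b') : Confined c R b' := by
  induction h with
  | refl => exact hb
  | tail _ hmove ih => exact ih.rhMove hR hmove

end Confined

end RHConfig

/-- in a Unit Rush Hour configuration with exactly one empty cell
`e`, a designated car `i` (initially occupying cell `c.pos i`) is moved during
some finite sequence of legal moves if and only if the static digraph contains
a directed path of length at least 1 from the empty cell to the car's cell. -/
theorem stmt_5 {m n k : ℕ} (c : RHConfig m n k) (hk : k + 1 = m * n)
    (e : Cell m n) (he : ∀ j, c.pos j ≠ e) (i : Fin k) :
    (∃ c' : RHConfig m n k,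
        Relation.ReflTransGen RHMove c c' ∧ c'.pos i ≠ c.pos i) ↔
    Relation.TransGen (staticEdge c) e (c.pos i) := by
  constructor
  · rintro ⟨c', hmoves, hmoved⟩
    have hconf : c.Confined {x | Relation.ReflTransGen (staticEdge c) e x} c' :=
      (RHConfig.Confined.refl fun x hx => c.empty_cell_unique hk he hx ▸ .refl).reflTransGen
        (fun _ _ hx hxy => hx.tail hxy) hmoves
    have hreach : Relation.ReflTransGen (staticEdge c) e (c.pos i) :=
      by_contra fun h => hmoved (hconf.pos_eq i h)
    exact (Relation.reflTransGen_iff_eq_or_transGen.mp hreach).resolve_left (he i)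
  · intro hpath
    obtain ⟨l, hchain, hlast, hnodup⟩ := hpath.to_reflTransGen.exists_nodup_isChain_cons
    obtain ⟨c', hmoves, hempty⟩ := c.exists_reflTransGen_forall_pos_ne_getLast he hchain hnodup
    exact ⟨c', hmoves, hlast ▸ hempty i⟩
end

section
/- Let C be a Unit Rush Hour configuration with exactly one empty cell, with exit row r, whose target car is the leftmost horizontal car in row r and does not initially occupy the leftmost cell (r,0) of row r. Then C is solvable (some finite sequence of legal moves brings the target car to cell (r,0)) if and only if, in the corresponding Rush Hour Maze — whose player starts at the empty cell and in which every other cell's orientation is given by the orientation of the car it contains — there is a finite sequence of legal maze moves during which the player at some point moves horizontally from cell (r,0) to cell (r,1). -/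
namespace Stmt6

lemma cell_eq {m n : ℕ} {u v : Cell m n} (h1 : u.1 = v.1) (h2 : u.2.val = v.2.val) : u = v :=
  Prod.ext h1 (Fin.ext h2)

lemma hAdj_symm {m n : ℕ} {u v : Cell m n} (h : hAdj u v) : hAdj v u :=
  ⟨h.1.symm, h.2.symm⟩

lemma vAdj_symm {m n : ℕ} {u v : Cell m n} (h : vAdj u v) : vAdj v u :=
  ⟨h.1.symm, h.2.symm⟩

lemma hAdj_ne {m n : ℕ} {u v : Cell m n} (h : hAdj u v) : u ≠ v := by
  rintro rfl; rcases h.2 with h' | h' <;> omega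

lemma vAdj_ne {m n : ℕ} {u v : Cell m n} (h : vAdj u v) : u ≠ v := by
  rintro rfl; rcases h.2 with h' | h' <;> omega

lemma uniq_empty {m n k : ℕ} (C : RHConfig m n k) (hk : k + 1 = m * n)
    {a b : Cell m n} (ha : ∀ j, C.pos j ≠ a) (hb : ∀ j, C.pos j ≠ b) : a = b := by
  have hS : (Finset.univ.image C.pos).card = k := by
    rw [Finset.card_image_of_injective _ C.inj, Finset.card_univ, Fintype.card_fin]
  have hcompl : (Finset.univ.image C.pos)ᶜ.card = 1 := by
    rw [Finset.card_compl, hS]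
    have : Fintype.card (Cell m n) = m * n := by
      simp [Fintype.card_prod]
    omega
  have hmem : ∀ x : Cell m n, (∀ j, C.pos j ≠ x) → x ∈ (Finset.univ.image C.pos)ᶜ := by
    intro x hx
    simp only [Finset.mem_compl, Finset.mem_image, not_exists]
    push_neg
    intro j _
    exact hx j
  exact Finset.card_le_one.mp (le_of_eq hcompl) a (hmem a ha) b (hmem b hb)

lemma occupied {m n k : ℕ} (C : RHConfig m n k) (hk : k + 1 = m * n)
    {e a : Cell m n} (he : ∀ j, C.pos j ≠ e) (ha : a ≠ e) : ∃ i, C.pos i = a := by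
  by_contra h
  push_neg at h
  exact ha (uniq_empty C hk h he)

def Rel {m n k : ℕ} (C : RHConfig m n k) (s : Maze m n) : Prop :=
  (∀ j, C.pos j ≠ s.player) ∧ ∀ j, s.ori (C.pos j) = C.ori j

lemma update_inj {α β : Type*} [DecidableEq α] {f : α → β} (hf : Function.Injective f)
    {a : α} {b : β} (hb : ∀ x, f x ≠ b) : Function.Injective (Function.update f a b) := by
  intro x y hxy
  by_cases hx : x = a <;> by_cases hy : y = a
  · rw [hx, hy]
  · rw [hx, Function.update_self, Function.update_of_ne hy] at hxy
    exact absurd hxy.symm (hb y)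
  · rw [hy, Function.update_self, Function.update_of_ne hx] at hxy
    exact absurd hxy (hb x)
  · rw [Function.update_of_ne hx, Function.update_of_ne hy] at hxy
    exact hf hxy

lemma move_forward {m n k : ℕ} (hk : k + 1 = m * n) {C C' : RHConfig m n k}
    {s : Maze m n} (hR : Rel C s) (hM : RHMove C C') :
    ∃ s', MazeMove s s' ∧ Rel C' s' := by
  obtain ⟨hor, i, hoth, hemp, hmv⟩ := hM
  have hpl : C'.pos i = s.player := uniq_empty C hk hemp hR.1
  have hne : C.pos i ≠ C'.pos i := by
    rcases hmv with ⟨_, h⟩ | ⟨_, h⟩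
    · exact hAdj_ne h
    · exact vAdj_ne h
  refine ⟨⟨C.pos i, Function.update s.ori s.player (C.ori i)⟩, ⟨C.ori i, ?_, ?_, rfl⟩, ?_, ?_⟩
  · rcases hmv with ⟨hb, hadj⟩ | ⟨hb, hadj⟩
    · exact Or.inl ⟨hb, by rw [← hpl]; exact hAdj_symm hadj⟩
    · exact Or.inr ⟨hb, by rw [← hpl]; exact vAdj_symm hadj⟩
  · exact hR.2 i
  · intro j
    by_cases hji : j = i
    · subst hji
      show C'.pos j ≠ C.pos j
      exact fun h => hne h.symm
    · rw [hoth j hji]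
      intro h
      exact hji (C.inj h)
  · intro j
    by_cases hji : j = i
    · subst hji
      show Function.update s.ori s.player (C.ori j) (C'.pos j) = C'.ori j
      rw [hpl, Function.update_self, hor]
    · show Function.update s.ori s.player (C.ori i) (C'.pos j) = C'.ori j
      rw [hoth j hji, Function.update_of_ne (hR.1 j), hR.2 j, hor]

lemma move_back {m n k : ℕ} (hk : k + 1 = m * n) {C : RHConfig m n k}
    {s s' : Maze m n} (hR : Rel C s) (hM : MazeMove s s') :
    ∃ C', RHMove C C' ∧ Rel C' s' := by
  obtain ⟨b, hadj, hbval, hupd⟩ := hM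
  have hne : s'.player ≠ s.player := by
    rcases hadj with ⟨_, h⟩ | ⟨_, h⟩
    · exact (hAdj_ne h).symm
    · exact (vAdj_ne h).symm
  obtain ⟨i, hi⟩ := occupied C hk hR.1 hne
  have hbi : C.ori i = b := by rw [← hR.2 i, hi, hbval]
  refine ⟨⟨C.ori, Function.update C.pos i s.player, update_inj C.inj hR.1⟩,
    ⟨rfl, i, ?_, ?_, ?_⟩, ?_, ?_⟩
  · intro j hj
    exact Function.update_of_ne hj _ _
  · intro j
    show C.pos j ≠ Function.update C.pos i s.player i
    rw [Function.update_self]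
    exact hR.1 j
  · show _ ∨ _
    have hupd_i : Function.update C.pos i s.player i = s.player := Function.update_self _ _ _
    rcases hadj with ⟨hb', h⟩ | ⟨hb', h⟩
    · refine Or.inl ⟨by rw [hbi, hb'], ?_⟩
      show hAdj (C.pos i) (Function.update C.pos i s.player i)
      rw [hupd_i, hi]
      exact hAdj_symm h
    · refine Or.inr ⟨by rw [hbi, hb'], ?_⟩
      show vAdj (C.pos i) (Function.update C.pos i s.player i)
      rw [hupd_i, hi]
      exact vAdj_symm h
  · intro j
    show Function.update C.pos i s.player j ≠ s'.player
    by_cases hj : j = i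
    · subst hj; rw [Function.update_self]; exact hne.symm
    · rw [Function.update_of_ne hj]
      intro h
      exact hj (C.inj (h.trans hi.symm))
  · intro j
    show s'.ori (Function.update C.pos i s.player j) = C.ori j
    rw [hupd]
    by_cases hj : j = i
    · subst hj
      rw [Function.update_self, Function.update_self, hbi]
    · rw [Function.update_of_ne hj, Function.update_of_ne (hR.1 j), hR.2 j]

lemma path_forward {m n k : ℕ} (hk : k + 1 = m * n) {C C' : RHConfig m n k}
    (h : Relation.ReflTransGen RHMove C C') :
    ∀ s : Maze m n, Rel C s → ∃ s', Relation.ReflTransGen MazeMove s s' ∧ Rel C' s' := by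
  induction h with
  | refl => exact fun s hR => ⟨s, Relation.ReflTransGen.refl, hR⟩
  | tail _ hmv ih =>
    intro s hR
    obtain ⟨s1, hp1, hR1⟩ := ih s hR
    obtain ⟨s2, hm2, hR2⟩ := move_forward hk hR1 hmv
    exact ⟨s2, hp1.tail hm2, hR2⟩

lemma path_back {m n k : ℕ} (hk : k + 1 = m * n) {s s' : Maze m n}
    (h : Relation.ReflTransGen MazeMove s s') :
    ∀ C : RHConfig m n k, Rel C s → ∃ C', Relation.ReflTransGen RHMove C C' ∧ Rel C' s' := by
  induction h with
  | refl => exact fun C hR => ⟨C, Relation.ReflTransGen.refl, hR⟩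
  | tail _ hmv ih =>
    intro C hR
    obtain ⟨C1, hp1, hR1⟩ := ih C hR
    obtain ⟨C2, hm2, hR2⟩ := move_back hk hR1 hmv
    exact ⟨C2, hp1.tail hm2, hR2⟩

lemma ori_path {m n k : ℕ} {C C' : RHConfig m n k}
    (h : Relation.ReflTransGen RHMove C C') : C'.ori = C.ori := by
  induction h with
  | refl => rfl
  | tail _ hmv ih => exact hmv.1.trans ih

def Inv {m n k : ℕ} (r : Fin m) (t : Fin k) (C : RHConfig m n k) : Prop :=
  C.ori t = true ∧ (C.pos t).1 = r ∧
  ∀ j, C.ori j = true → (C.pos j).1 = r → (C.pos t).2 ≤ (C.pos j).2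

lemma inv_move {m n k : ℕ} {r : Fin m} {t : Fin k} {C C' : RHConfig m n k}
    (hI : Inv r t C) (hM : RHMove C C') : Inv r t C' := by
  obtain ⟨hor, i, hoth, hemp, hmv⟩ := hM
  obtain ⟨hIto, hItr, hIleft⟩ := hI
  refine ⟨by rw [hor]; exact hIto, ?_, ?_⟩
  · by_cases hti : t = i
    · subst hti
      rcases hmv with ⟨_, hadj⟩ | ⟨hb, _⟩
      · rw [← hadj.1]; exact hItr
      · rw [hIto] at hb; exact absurd hb (by simp)
    · rw [hoth t hti]; exact hItr
  · intro j hjo hjr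
    rw [hor] at hjo
    by_cases hji : j = i
    · subst hji
      by_cases htj : t = j
      · subst htj; exact le_refl _
      rcases hmv with ⟨_, hadj⟩ | ⟨hb, _⟩
      · -- horizontal car j ≠ t moves; t stays put
        have hts : C'.pos t = C.pos t := hoth t htj
        have hrow : (C.pos j).1 = r := by rw [hadj.1]; exact hjr
        have hle : (C.pos t).2.val ≤ (C.pos j).2.val := hIleft j hjo hrow
        have hne1 : (C.pos t).2.val ≠ (C.pos j).2.val := fun h =>
          htj (C.inj (cell_eq (hItr.trans hrow.symm) h))
        rw [Fin.le_def, hts]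
        rcases hadj.2 with h | h <;> omega
      · rw [hjo] at hb; exact absurd hb (by simp)
    · have hjs : C'.pos j = C.pos j := hoth j hji
      by_cases hti : t = i
      · subst hti
        rcases hmv with ⟨_, hadj⟩ | ⟨hb, _⟩
        · -- t moves horizontally, j stays
          have hjrow : (C.pos j).1 = r := by rw [← hjs]; exact hjr
          have hle : (C.pos t).2.val ≤ (C.pos j).2.val := hIleft j hjo hjrow
          have hne1 : (C.pos t).2.val ≠ (C.pos j).2.val := fun h =>
            hji (C.inj (cell_eq (hItr.trans hjrow.symm) h)).symm
          rw [Fin.le_def, hjs]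
          rcases hadj.2 with h | h <;> omega
        · rw [hIto] at hb; exact absurd hb (by simp)
      · rw [hjs, hoth t hti]
        exact hIleft j hjo (by rw [← hjs]; exact hjr)

lemma inv_path {m n k : ℕ} {r : Fin m} {t : Fin k} {C C' : RHConfig m n k}
    (h : Relation.ReflTransGen RHMove C C') (hI : Inv r t C) : Inv r t C' := by
  induction h with
  | refl => exact hI
  | tail _ hmv ih => exact inv_move ih hmv

lemma find_key {m n k : ℕ} {C C' : RHConfig m n k} {t : Fin k} {X : Cell m n}
    (h : Relation.ReflTransGen RHMove C C') (h0 : C.pos t ≠ X) (h1 : C'.pos t = X) :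
    ∃ D D' : RHConfig m n k, Relation.ReflTransGen RHMove C D ∧ RHMove D D' ∧
      D.pos t ≠ X ∧ D'.pos t = X := by
  revert h1
  induction h with
  | refl => exact fun h1 => absurd h1 h0
  | @tail b c hpath hmv ih =>
    intro h1
    by_cases hb : b.pos t = X
    · exact ih hb
    · exact ⟨b, c, hpath, hmv, hb, h1⟩

end Stmt6

/-- let `C` be a Unit Rush Hour configuration with exactly one
empty cell `e`, exit row `r`, whose target car `t` is the leftmost horizontal
car in row `r` and does not initially occupy the leftmost cell `(r,0)`.
Then `C` is solvable (some finite sequence of legal moves brings the target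
car to `(r,0)`) iff in the corresponding Rush Hour Maze `M0` — player starting
at `e`, every other cell oriented as the car it contains — some finite
sequence of legal maze moves at some point moves the player horizontally from
`(r,0)` to `(r,1)`. -/
theorem stmt_6 {m n k : ℕ} (hn : 1 < n)
    (C : RHConfig m n k) (hk : k + 1 = m * n)
    (e : Cell m n) (he : ∀ j, C.pos j ≠ e)
    (r : Fin m) (t : Fin k)
    (htH : C.ori t = true) (htr : (C.pos t).1 = r)
    (hleft : ∀ j, C.ori j = true → (C.pos j).1 = r →
      (C.pos t).2 ≤ (C.pos j).2)
    (hnot0 : (C.pos t).2.val ≠ 0)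
    (M0 : Maze m n) (hM0p : M0.player = e)
    (hM0o : ∀ j, M0.ori (C.pos j) = C.ori j) :
    (∃ C' : RHConfig m n k, Relation.ReflTransGen RHMove C C' ∧
        C'.pos t = (r, ⟨0, by omega⟩)) ↔
    (∃ s s' : Maze m n, Relation.ReflTransGen MazeMove M0 s ∧ MazeMove s s' ∧
        s.player = (r, ⟨0, by omega⟩) ∧ s'.player = (r, ⟨1, hn⟩)) := by
  have hRel0 : Stmt6.Rel C M0 := ⟨fun j => by rw [hM0p]; exact he j, hM0o⟩
  constructor
  · rintro ⟨C', hpath, hC'⟩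
    have h0 : C.pos t ≠ (r, ⟨0, by omega⟩) := by
      intro h
      apply hnot0
      rw [h]
    obtain ⟨D, D', hpD, hmv, hDne, hD'⟩ := Stmt6.find_key hpath h0 hC'
    obtain ⟨horD, i, hoth, hemp, hmvi⟩ := hmv
    have hti : t = i := by
      by_contra hti
      exact hDne ((hoth t hti).symm.trans hD')
    subst hti
    have hDori : D.ori t = true := by rw [Stmt6.ori_path hpD]; exact htH
    rcases hmvi with ⟨_, hadj⟩ | ⟨hb, _⟩
    · rw [hD'] at hadj
      have hrow : (D.pos t).1 = r := hadj.1
      have hx0 : ((r, ⟨0, by omega⟩) : Cell m n).2.val = 0 := rfl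
      have hcol : (D.pos t).2.val = 1 := by
        rcases hadj.2 with h | h <;> rw [hx0] at h <;> omega
      have hDt : D.pos t = (r, ⟨1, hn⟩) := Stmt6.cell_eq hrow hcol
      have hempX : ∀ j, D.pos j ≠ (r, ⟨0, by omega⟩) := fun j => hD' ▸ hemp j
      obtain ⟨s, hps, hRs⟩ := Stmt6.path_forward hk hpD M0 hRel0
      have hsp : s.player = (r, ⟨0, by omega⟩) :=
        (Stmt6.uniq_empty D hk hRs.1 hempX)
      refine ⟨s, ⟨(r, ⟨1, hn⟩), Function.update s.ori s.player true⟩, hps,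
        ⟨true, Or.inl ⟨rfl, ?_⟩, ?_, rfl⟩, hsp, rfl⟩
      · rw [hsp]
        exact ⟨rfl, Or.inl rfl⟩
      · show s.ori (r, ⟨1, hn⟩) = true
        rw [← hDt, hRs.2 t, hDori]
    · rw [hDori] at hb
      exact absurd hb (by simp)
  · rintro ⟨s, s', hps, hmv, hsp, hs'p⟩
    obtain ⟨D, hpD, hRs⟩ := Stmt6.path_back hk hps C hRel0
    have hIinv : Stmt6.Inv r t D := Stmt6.inv_path hpD ⟨htH, htr, hleft⟩
    obtain ⟨b, hadj, hbval, hupd⟩ := hmv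
    have hne : s'.player ≠ s.player := by
      rw [hs'p, hsp]
      intro h
      have h2 := congrArg (fun c : Cell m n => c.2.val) h
      simp at h2
    obtain ⟨i, hi⟩ := Stmt6.occupied D hk hRs.1 hne
    have hbtrue : b = true := by
      rcases hadj with ⟨hb', _⟩ | ⟨hb', hv⟩
      · exact hb'
      · exfalso
        rw [hsp, hs'p] at hv
        have h2 := congrArg Fin.val hv.1
        simp at h2
    have hDi : D.ori i = true := by rw [← hRs.2 i, hi, hbval, hbtrue]
    have hi' : D.pos i = (r, ⟨1, hn⟩) := by rw [hi, hs'p]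
    have h1 : (D.pos t).2 ≤ (D.pos i).2 := hIinv.2.2 i hDi (by rw [hi'])
    have hle : (D.pos t).2.val ≤ 1 := by
      rw [hi'] at h1
      exact h1
    have hne0 : (D.pos t).2.val ≠ 0 := by
      intro h
      exact hRs.1 t (by rw [hsp]; exact Stmt6.cell_eq hIinv.2.1 h)
    have hti : t = i := D.inj (by
      rw [hi']
      exact Stmt6.cell_eq hIinv.2.1 (by show (D.pos t).2.val = 1; omega))
    subst hti
    have hfresh : ∀ x, D.pos x ≠ ((r, ⟨0, by omega⟩) : Cell m n) :=
      fun x h => hRs.1 x (h.trans hsp.symm)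
    refine ⟨⟨D.ori, Function.update D.pos t (r, ⟨0, by omega⟩),
      Stmt6.update_inj D.inj hfresh⟩, hpD.tail ?_, ?_⟩
    · refine ⟨rfl, t, fun j hj => Function.update_of_ne hj _ _, ?_, Or.inl ⟨hIinv.1, ?_⟩⟩
      · intro j
        show D.pos j ≠ Function.update D.pos t _ t
        rw [Function.update_self]
        exact hfresh j
      · show hAdj (D.pos t) (Function.update D.pos t _ t)
        rw [Function.update_self, hi']
        exact ⟨rfl, Or.inr rfl⟩
    · show Function.update D.pos t _ t = _
      exact Function.update_self _ _ _
end
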